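/- Let f, g and h be entire functions given by everywhere absolutely convergent vector valued Dirichlet series, and let p ≥ 0, q ≥ 0, m ≥ 0 be integers. Assume 0 < λ_h^{(m,q)}(f) ≤ ρ_h^{(m,q)}(f) < +∞. Then: (i) λ_g^{(p,q)}(f) = +∞ when ρ_h^{(m,p)}(g) = 0; (ii) ρ_g^{(p,q)}(f) = +∞ when λ_h^{(m,p)}(g) = 0; (iii) λ_g^{(p,q)}(f) = 0 when ρ_h^{(m,p)}(g) = +∞; and (iv) ρ_g^{(p,q)}(f) = 0 when λ_h^{(m,p)}(g) = +∞. -/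

import Mathlib

open Filter Topology

noncomputable section

/-- An entire function given by an everywhere absolutely convergent
vector valued Dirichlet series, with coefficients in a Banach space `E`. -/
structure VVDS (E : Type*) [NormedAddCommGroup E] [NormedSpace ℂ E] [CompleteSpace E] where
  a : ℕ → E
  lam : ℕ → ℝ
  lam_pos : ∀ n, 0 < lam n
  lam_strictMono : StrictMono lam
  lam_tendsto : Tendsto lam atTop atTop
  log_index_bound : ∃ D : ℝ, ∀ᶠ n : ℕ in atTop, Real.log (n : ℝ) / lam n ≤ D
  coeff_decay : Tendsto (fun n => Real.log ‖a n‖ / lam n) atTop atBot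
  abs_conv : ∀ s : ℂ, Summable (fun n => Real.exp (s.re * lam n) * ‖a n‖)

variable {E F G : Type*} [NormedAddCommGroup E] [NormedSpace ℂ E] [CompleteSpace E]
  [NormedAddCommGroup F] [NormedSpace ℂ F] [CompleteSpace F]
  [NormedAddCommGroup G] [NormedSpace ℂ G] [CompleteSpace G]

/-- The entire function defined by the vector valued Dirichlet series. -/
def VVDS.toFun (f : VVDS E) (s : ℂ) : E := ∑' n, Complex.exp (s * (f.lam n : ℂ)) • f.a n

/-- The maximum modulus function `M_f(σ) = sup_t ‖f(σ+it)‖`. -/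
def VVDS.M (f : VVDS E) (σ : ℝ) : ℝ := ⨆ t : ℝ, ‖f.toFun ((σ : ℂ) + (t : ℂ) * Complex.I)‖

/-- The inverse function of the maximum modulus function. -/
def VVDS.Minv (f : VVDS E) (y : ℝ) : ℝ := sInf {σ : ℝ | y ≤ f.M σ}

/-- The (p,q)-th relative Ritt order of `f` with respect to `g`. -/
def relRittOrder (p q : ℕ) (f : VVDS E) (g : VVDS F) : EReal :=
  limsup (fun σ : ℝ =>
    ((Real.log^[p] (g.Minv (f.M σ)) / Real.log^[q] σ : ℝ) : EReal)) atTop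

/-- The (p,q)-th relative Ritt lower order of `f` with respect to `g`. -/
def relRittLowerOrder (p q : ℕ) (f : VVDS E) (g : VVDS F) : EReal :=
  liminf (fun σ : ℝ =>
    ((Real.log^[p] (g.Minv (f.M σ)) / Real.log^[q] σ : ℝ) : EReal)) atTop

/-- The (p,q)-th relative Ritt type of `f` with respect to `g`. -/
def relRittType (p q : ℕ) (f : VVDS E) (g : VVDS F) : EReal :=
  limsup (fun σ : ℝ =>
    ((Real.log^[p-1] (g.Minv (f.M σ)) /
      (Real.log^[q-1] σ) ^ (relRittOrder p q f g).toReal : ℝ) : EReal)) atTop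

/-- The (p,q)-th relative Ritt lower type of `f` with respect to `g`. -/
def relRittLowerType (p q : ℕ) (f : VVDS E) (g : VVDS F) : EReal :=
  liminf (fun σ : ℝ =>
    ((Real.log^[p-1] (g.Minv (f.M σ)) /
      (Real.log^[q-1] σ) ^ (relRittOrder p q f g).toReal : ℝ) : EReal)) atTop

/-- The (p,q)-th relative Ritt weak type of `f` with respect to `g`. -/
def relRittWeakType (p q : ℕ) (f : VVDS E) (g : VVDS F) : EReal :=
  liminf (fun σ : ℝ =>
    ((Real.log^[p-1] (g.Minv (f.M σ)) /
      (Real.log^[q-1] σ) ^ (relRittLowerOrder p q f g).toReal : ℝ) : EReal)) atTop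

/-- The growth indicator `τ̄_g^{(p,q)}(f)`. -/
def relRittUpperWeakType (p q : ℕ) (f : VVDS E) (g : VVDS F) : EReal :=
  limsup (fun σ : ℝ =>
    ((Real.log^[p-1] (g.Minv (f.M σ)) /
      (Real.log^[q-1] σ) ^ (relRittLowerOrder p q f g).toReal : ℝ) : EReal)) atTop


/-!
The maximum modulus `M_f` is log-convex by Hadamard's three lines theorem. Bohr's mean value
estimate `‖aₖ‖ e^{σλₖ} ≤ M_f(σ)` gives `M_f > 0` and `M_f → +∞` at `+∞`, and domination by
`∑ ‖aₙ‖ e^{σλₙ}` gives `M_f → 0` at `-∞`. A convex function tending to `-∞` at `-∞` is strictly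
increasing, so `M_f` is an increasing bijection `ℝ → (0, ∞)` with inverse `M_f⁻¹`. Hence
`u = M_g⁻¹ ∘ M_f` is an increasing bijection of `ℝ` and `M_h⁻¹ ∘ M_f = (M_h⁻¹ ∘ M_g) ∘ u`, so
`log^[p] u(σ) / log^[q] σ` is the quotient of `log^[m] M_h⁻¹(M_f σ) / log^[q] σ`, which stays
between two positive constants, by `log^[m] M_h⁻¹(M_g(u σ)) / log^[p] u(σ)`, whose limsup and
liminf are `ρ_h^{(m,p)}(g)` and `λ_h^{(m,p)}(g)` because `u` maps `atTop` onto `atTop`.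
-/

theorem norm_intervalIntegral_exp_mul_I_le {ω : ℝ} (hω : ω ≠ 0) (a b : ℝ) :
    ‖∫ t in a..b, Complex.exp (↑(ω * t) * Complex.I)‖ ≤ 2 / |ω| := by
  have hc : (ω : ℂ) * Complex.I ≠ 0 := mul_ne_zero (by exact_mod_cast hω) Complex.I_ne_zero
  have hexp : ∀ t : ℝ, Complex.exp (↑(ω * t) * Complex.I) = Complex.exp (ω * Complex.I * t) := by
    intro t; push_cast; ring_nf
  simp_rw [hexp, integral_exp_mul_complex hc, norm_div, norm_mul, Complex.norm_I,
    Complex.norm_real, Real.norm_eq_abs, mul_one, ← hexp]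
  gcongr
  calc _ ≤ ‖Complex.exp (↑(ω * b) * Complex.I)‖ + ‖Complex.exp (↑(ω * a) * Complex.I)‖ :=
        norm_sub_le _ _
    _ = 2 := by rw [Complex.norm_exp_ofReal_mul_I, Complex.norm_exp_ofReal_mul_I]; norm_num

theorem tendsto_mean_exp_mul_I (ω : ℝ) :
    Tendsto (fun T : ℝ => (2 * T)⁻¹ • ∫ t in -T..T, Complex.exp (↑(ω * t) * Complex.I)) atTop
      (𝓝 (if ω = 0 then 1 else 0)) := by
  split_ifs with hω
  · refine tendsto_const_nhds.congr' ?_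
    filter_upwards [eventually_gt_atTop 0] with T hT
    simp only [hω, zero_mul, Complex.ofReal_zero, Complex.exp_zero, intervalIntegral.integral_const,
      smul_smul]
    rw [sub_neg_eq_add, ← two_mul, inv_mul_cancel₀ (by positivity), one_smul]
  · refine squeeze_zero_norm' ?_ (by simpa using tendsto_inv_atTop_zero.const_mul (|ω|⁻¹))
    filter_upwards [eventually_gt_atTop 0] with T hT
    rw [norm_smul, Real.norm_of_nonneg (by positivity)]
    calc (2 * T)⁻¹ * ‖∫ t in -T..T, Complex.exp (↑(ω * t) * Complex.I)‖
        ≤ (2 * T)⁻¹ * (2 / |ω|) := by gcongr; exact norm_intervalIntegral_exp_mul_I_le hω _ _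
      _ = |ω|⁻¹ * T⁻¹ := by field_simp

theorem norm_mean_exp_mul_I_le_one (ω : ℝ) {T : ℝ} (hT : 0 < T) :
    ‖(2 * T)⁻¹ • ∫ t in -T..T, Complex.exp (↑(ω * t) * Complex.I)‖ ≤ 1 := by
  have hint := intervalIntegral.norm_integral_le_of_norm_le_const (a := -T) (b := T) (C := 1)
    (f := fun t => Complex.exp (↑(ω * t) * Complex.I))
    (fun t _ => (Complex.norm_exp_ofReal_mul_I _).le)
  rw [norm_smul, Real.norm_of_nonneg (by positivity)]
  calc (2 * T)⁻¹ * _ ≤ (2 * T)⁻¹ * (1 * |T - -T|) := by gcongr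
    _ = 1 := by rw [abs_of_pos (by linarith)]; field_simp; ring

open MeasureTheory in
theorem hasSum_intervalIntegral_exp_mul_I_smul {ι : Type*} [Countable ι] {c : ι → E} {ω : ι → ℝ}
    (hc : Summable fun n => ‖c n‖) (a b : ℝ) :
    HasSum (fun n => (∫ t in a..b, Complex.exp (↑(ω n * t) * Complex.I)) • c n)
      (∫ t in a..b, ∑' n, Complex.exp (↑(ω n * t) * Complex.I) • c n) := by
  have hterm : ∀ n t, ‖Complex.exp (↑(ω n * t) * Complex.I) • c n‖ = ‖c n‖ := fun n t => by
    rw [norm_smul, Complex.norm_exp_ofReal_mul_I, one_mul]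
  have hcont : ∀ n, Continuous fun t : ℝ => Complex.exp (↑(ω n * t) * Complex.I) := fun n => by
    fun_prop
  simp_rw [← intervalIntegral.integral_smul_const]
  refine intervalIntegral.hasSum_integral_of_dominated_convergence (fun n _ => ‖c n‖)
    (fun n => ((hcont n).smul continuous_const).aestronglyMeasurable)
    (fun n => ae_of_all _ fun t _ => (hterm n t).le) (ae_of_all _ fun _ _ => hc)
    intervalIntegrable_const (ae_of_all _ fun t _ => ?_)
  exact (hc.of_norm_bounded fun n => (hterm n t).le).hasSum

/-- The mean of `e^{-i ω_k t}` times the sum over `[-T, T]` tends to `c k` as `T → ∞`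
(Tannery's theorem), and it is bounded by `B`. -/
theorem norm_le_of_norm_tsum_exp_mul_I_smul_le {ι : Type*} [Countable ι] {c : ι → E}
    {ω : ι → ℝ} (hc : Summable fun n => ‖c n‖) (hω : Function.Injective ω) {B : ℝ}
    (hB : ∀ t : ℝ, ‖∑' n, Complex.exp (↑(ω n * t) * Complex.I) • c n‖ ≤ B) (k : ι) :
    ‖c k‖ ≤ B := by
  classical
  set ν : ι → ℝ := fun n => ω n - ω k
  set m : ℝ → ι → ℂ := fun T n => (2 * T)⁻¹ • ∫ t in -T..T, Complex.exp (↑(ν n * t) * Complex.I)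
  have hshift : ∀ t : ℝ, ∑' n, Complex.exp (↑(ν n * t) * Complex.I) • c n
      = Complex.exp (↑(-ω k * t) * Complex.I) •
          ∑' n, Complex.exp (↑(ω n * t) * Complex.I) • c n := by
    intro t
    rw [← tsum_const_smul'']
    congr 1 with n
    rw [smul_smul, ← Complex.exp_add]
    simp only [ν]
    push_cast
    ring_nf
  have hlim : Tendsto (fun T => ∑' n, m T n • c n) atTop (𝓝 (c k)) := by
    have hν : ∀ n, ν n = 0 ↔ n = k := fun n => sub_eq_zero.trans hω.eq_iff
    have := tendsto_tsum_of_dominated_convergence (𝓕 := atTop) (f := fun T n => m T n • c n) hc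
      (fun n => (tendsto_mean_exp_mul_I (ν n)).smul_const (c n)) ?_
    · simpa only [hν, ite_smul, one_smul, zero_smul, tsum_ite_eq] using this
    filter_upwards [eventually_gt_atTop 0] with T hT n
    rw [norm_smul]
    exact mul_le_of_le_one_left (norm_nonneg _) (norm_mean_exp_mul_I_le_one _ hT)
  refine le_of_tendsto hlim.norm ?_
  filter_upwards [eventually_gt_atTop 0] with T hT
  have hsum := ((hasSum_intervalIntegral_exp_mul_I_smul (ω := ν) hc (-T) T).const_smul
    (2 * T)⁻¹).tsum_eq
  simp only [m, smul_assoc] at hsum ⊢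
  rw [hsum, norm_smul, Real.norm_of_nonneg (by positivity)]
  calc (2 * T)⁻¹ * ‖∫ t in -T..T, ∑' n, Complex.exp (↑(ν n * t) * Complex.I) • c n‖
      ≤ (2 * T)⁻¹ * (B * |T - -T|) := by
        gcongr
        refine intervalIntegral.norm_integral_le_of_norm_le_const fun t _ => ?_
        rw [hshift, norm_smul, Complex.norm_exp_ofReal_mul_I, one_mul]
        exact hB t
    _ = B := by rw [abs_of_pos (by linarith)]; field_simp; ring

theorem ConvexOn.strictMono_of_tendsto_atBot {φ : ℝ → ℝ} (hφ : ConvexOn ℝ Set.univ φ)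
    (hbot : Tendsto φ atBot atBot) : StrictMono φ := fun x y hxy => by
  obtain ⟨z, hzφ, hzx⟩ := ((hbot.eventually_lt_atBot (φ x)).and (eventually_lt_atBot x)).exists
  exact hφ.lt_right_of_left_lt trivial trivial (Ioo_subset_openSegment ⟨hzx, hxy⟩) hzφ

namespace VVDS

variable (f : VVDS E)

def majorant (σ : ℝ) : ℝ := ∑' n, Real.exp (σ * f.lam n) * ‖f.a n‖

theorem summable_majorant (σ : ℝ) : Summable fun n => Real.exp (σ * f.lam n) * ‖f.a n‖ := by
  simpa using f.abs_conv σ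

theorem norm_exp_smul_coeff (s : ℂ) (n : ℕ) :
    ‖Complex.exp (s * f.lam n) • f.a n‖ = Real.exp (s.re * f.lam n) * ‖f.a n‖ := by
  rw [norm_smul, Complex.norm_exp, Complex.re_mul_ofReal]

theorem norm_toFun_le_majorant (s : ℂ) : ‖f.toFun s‖ ≤ f.majorant s.re :=
  tsum_of_norm_bounded (f.summable_majorant s.re).hasSum fun n => (f.norm_exp_smul_coeff s n).le

theorem majorant_mono : Monotone f.majorant := fun σ σ' h =>
  Summable.tsum_le_tsum (fun n => by gcongr; exact (f.lam_pos n).le)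
    (f.summable_majorant σ) (f.summable_majorant σ')

theorem tendsto_majorant_atBot : Tendsto f.majorant atBot (𝓝 0) := by
  have hterm : ∀ n, Tendsto (fun σ => Real.exp (σ * f.lam n) * ‖f.a n‖) atBot (𝓝 0) := fun n => by
    simpa using (Real.tendsto_exp_atBot.comp
      (tendsto_id.atBot_mul_const (f.lam_pos n))).mul_const ‖f.a n‖
  have hbound : ∀ᶠ σ in atBot, ∀ n, ‖Real.exp (σ * f.lam n) * ‖f.a n‖‖
      ≤ Real.exp (0 * f.lam n) * ‖f.a n‖ := by
    filter_upwards [eventually_le_atBot 0] with σ hσ n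
    rw [Real.norm_of_nonneg (by positivity)]
    gcongr
    exact (f.lam_pos n).le
  show Tendsto (fun σ => ∑' n, Real.exp (σ * f.lam n) * ‖f.a n‖) atBot (𝓝 0)
  simpa only [tsum_zero] using
    tendsto_tsum_of_dominated_convergence (f.summable_majorant 0) hterm hbound

theorem bddAbove_range_norm_toFun (σ : ℝ) :
    BddAbove (Set.range fun t : ℝ => ‖f.toFun (σ + t * Complex.I)‖) :=
  ⟨f.majorant σ, Set.forall_mem_range.2 fun t => by
    simpa using f.norm_toFun_le_majorant (σ + t * Complex.I)⟩

theorem norm_toFun_le_M (s : ℂ) : ‖f.toFun s‖ ≤ f.M s.re := by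
  simpa only [VVDS.M, Complex.re_add_im] using le_ciSup (f.bddAbove_range_norm_toFun s.re) s.im

theorem M_nonneg (σ : ℝ) : 0 ≤ f.M σ := by
  simpa using (norm_nonneg _).trans (f.norm_toFun_le_M σ)

theorem M_le_majorant (σ : ℝ) : f.M σ ≤ f.majorant σ :=
  ciSup_le fun t => by simpa using f.norm_toFun_le_majorant (σ + t * Complex.I)

theorem tendsto_M_atBot : Tendsto f.M atBot (𝓝 0) :=
  tendsto_of_tendsto_of_tendsto_of_le_of_le tendsto_const_nhds f.tendsto_majorant_atBot
    f.M_nonneg f.M_le_majorant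

theorem exp_mul_norm_coeff_le_M (σ : ℝ) (k : ℕ) : Real.exp (σ * f.lam k) * ‖f.a k‖ ≤ f.M σ := by
  have hc : Summable fun n => ‖Complex.exp ((σ : ℂ) * f.lam n) • f.a n‖ := by
    simpa only [f.norm_exp_smul_coeff, Complex.ofReal_re] using f.summable_majorant σ
  have hB : ∀ t : ℝ, ‖∑' n, Complex.exp (↑(f.lam n * t) * Complex.I) •
      Complex.exp ((σ : ℂ) * f.lam n) • f.a n‖ ≤ f.M σ := fun t => by
    convert f.norm_toFun_le_M (σ + t * Complex.I) using 2
    · rw [VVDS.toFun]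
      congr 1 with n
      rw [smul_smul, ← Complex.exp_add]
      push_cast
      ring_nf
    · simp
  simpa only [f.norm_exp_smul_coeff, Complex.ofReal_re] using
    norm_le_of_norm_tsum_exp_mul_I_smul_le hc f.lam_strictMono.injective hB k

theorem exists_coeff_ne_zero : ∃ k, f.a k ≠ 0 := by
  obtain ⟨k, hk⟩ := (f.coeff_decay.eventually (eventually_lt_atBot 0)).exists
  exact ⟨k, fun h0 => by simp [h0] at hk⟩

theorem M_pos (σ : ℝ) : 0 < f.M σ := by
  obtain ⟨k, hk⟩ := f.exists_coeff_ne_zero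
  exact (mul_pos (Real.exp_pos _) (norm_pos_iff.2 hk)).trans_le (f.exp_mul_norm_coeff_le_M σ k)

theorem tendsto_M_atTop : Tendsto f.M atTop atTop := by
  obtain ⟨k, hk⟩ := f.exists_coeff_ne_zero
  refine tendsto_atTop_mono (f.exp_mul_norm_coeff_le_M · k) ?_
  exact (Real.tendsto_exp_atTop.comp (tendsto_id.atTop_mul_const (f.lam_pos k))).atTop_mul_const
    (norm_pos_iff.2 hk)

theorem differentiable_toFun : Differentiable ℂ f.toFun := fun s => by
  have hU : IsOpen {z : ℂ | z.re < s.re + 1} := isOpen_lt Complex.continuous_re continuous_const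
  refine (Complex.differentiableOn_tsum_of_summable_norm (f.summable_majorant (s.re + 1))
    (fun n => by fun_prop) hU fun n z hz => ?_).differentiableAt (hU.mem_nhds (by simp))
  rw [f.norm_exp_smul_coeff]
  gcongr
  exacts [(f.lam_pos n).le, le_of_lt hz]

open Complex.HadamardThreeLines in
theorem M_le_rpow_mul_rpow {x y : ℝ} (hxy : x < y) {a b : ℝ} (ha : 0 ≤ a) (hb : 0 ≤ b)
    (hab : a + b = 1) : f.M (a * x + b * y) ≤ f.M x ^ a * f.M y ^ b := by
  have hbdd : BddAbove ((norm ∘ f.toFun) '' verticalClosedStrip x y) := by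
    refine ⟨f.majorant y, Set.forall_mem_image.2 fun z hz => ?_⟩
    exact (f.norm_toFun_le_majorant z).trans (f.majorant_mono hz.2)
  have hline : ∀ σ, ∀ z ∈ Complex.re ⁻¹' {σ}, ‖f.toFun z‖ ≤ f.M σ := fun σ z hz => by
    simpa [show z.re = σ from hz] using f.norm_toFun_le_M z
  have hleft : a * x + b * y - x = b * (y - x) := by linear_combination x * hab
  have hright : y - (a * x + b * y) = a * (y - x) := by linear_combination -y * hab
  have hθ : (a * x + b * y - x) / (y - x) = b := by
    rw [hleft, mul_div_cancel_right₀ _ (sub_ne_zero.2 hxy.ne')]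
  refine ciSup_le fun t => ?_
  have hmem : (↑(a * x + b * y) + t * Complex.I) ∈ verticalClosedStrip x y := by
    have hre : (↑(a * x + b * y) + t * Complex.I).re = a * x + b * y := by simp
    rw [verticalClosedStrip, Set.mem_preimage, hre, Set.mem_Icc]
    exact ⟨by linarith [mul_nonneg hb (sub_nonneg.2 hxy.le)],
      by linarith [mul_nonneg ha (sub_nonneg.2 hxy.le)]⟩
  simpa [hθ, show 1 - b = a by linarith] using norm_le_interp_of_mem_verticalClosedStrip' hxy hmem
    f.differentiable_toFun.diffContOnCl hbdd (hline x) (hline y)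

theorem convexOn_log_M : ConvexOn ℝ Set.univ fun σ => Real.log (f.M σ) := by
  refine LinearOrder.convexOn_of_lt convex_univ fun x _ y _ hxy a b ha hb hab => ?_
  have hM := Real.log_le_log (f.M_pos _) (f.M_le_rpow_mul_rpow hxy ha.le hb.le hab)
  rwa [Real.log_mul (Real.rpow_pos_of_pos (f.M_pos x) a).ne'
    (Real.rpow_pos_of_pos (f.M_pos y) b).ne', Real.log_rpow (f.M_pos x),
    Real.log_rpow (f.M_pos y)] at hM

theorem continuous_M : Continuous f.M := by
  have hlog : Continuous fun σ => Real.log (f.M σ) :=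
    continuousOn_univ.1 (f.convexOn_log_M.continuousOn isOpen_univ)
  exact (Real.continuous_exp.comp hlog).congr fun σ => Real.exp_log (f.M_pos σ)

theorem strictMono_M : StrictMono f.M := by
  have hbot : Tendsto (fun σ => Real.log (f.M σ)) atBot atBot :=
    Real.tendsto_log_nhdsGT_zero.comp
      (tendsto_nhdsWithin_iff.2 ⟨f.tendsto_M_atBot, Eventually.of_forall f.M_pos⟩)
  exact fun x y hxy => (Real.log_lt_log_iff (f.M_pos x) (f.M_pos y)).1
    (f.convexOn_log_M.strictMono_of_tendsto_atBot hbot hxy)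

theorem exists_M_eq {y : ℝ} (hy : 0 < y) : ∃ σ, f.M σ = y := by
  obtain ⟨a, ha⟩ := (f.tendsto_M_atBot.eventually (eventually_lt_nhds hy)).exists
  obtain ⟨b, hb⟩ := (f.tendsto_M_atTop.eventually (eventually_ge_atTop y)).exists
  exact intermediate_value_univ a b f.continuous_M ⟨ha.le, hb⟩

theorem Minv_M (σ : ℝ) : f.Minv (f.M σ) = σ := by
  have hset : {τ : ℝ | f.M σ ≤ f.M τ} = Set.Ici σ := Set.ext fun τ => f.strictMono_M.le_iff_le
  rw [VVDS.Minv, hset, csInf_Ici]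

theorem M_Minv {y : ℝ} (hy : 0 < y) : f.M (f.Minv y) = y := by
  obtain ⟨σ, rfl⟩ := f.exists_M_eq hy
  rw [f.Minv_M]

theorem Minv_lt_Minv {y y' : ℝ} (hy : 0 < y) (hyy' : y < y') : f.Minv y < f.Minv y' := by
  rw [← f.strictMono_M.lt_iff_lt, f.M_Minv hy, f.M_Minv (hy.trans hyy')]
  exact hyy'

theorem map_Minv_comp_M_atTop (g : VVDS F) : map (fun σ => g.Minv (f.M σ)) atTop = atTop := by
  have hmono : StrictMono fun σ => g.Minv (f.M σ) := fun σ σ' h =>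
    g.Minv_lt_Minv (f.M_pos σ) (f.strictMono_M h)
  have hsurj : Function.Surjective fun σ => g.Minv (f.M σ) := fun τ =>
    ⟨f.Minv (g.M τ), by simp only [f.M_Minv (g.M_pos τ), g.Minv_M]⟩
  exact (hmono.orderIsoOfSurjective _ hsurj).map_atTop

end VVDS

section Ratios

variable {α : Type*} {l : Filter α}

theorem exists_pos_eventually_lt_of_pos_liminf {φ : α → ℝ}
    (h : 0 < liminf (fun x => (φ x : EReal)) l) : ∃ c > 0, ∀ᶠ x in l, c < φ x := by
  obtain ⟨c, hc0, hc⟩ := EReal.exists_between_coe_real h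
  exact ⟨c, by exact_mod_cast hc0,
    (eventually_lt_of_lt_liminf hc).mono fun _ => EReal.coe_lt_coe_iff.1⟩

theorem exists_pos_eventually_lt_of_limsup_lt_top {φ : α → ℝ}
    (h : limsup (fun x => (φ x : EReal)) l < ⊤) : ∃ C > 0, ∀ᶠ x in l, φ x < C := by
  obtain ⟨C, hC, -⟩ := EReal.exists_between_coe_real h
  refine ⟨|C| + 1, by positivity, (eventually_lt_of_limsup_lt hC).mono fun x hx => ?_⟩
  have := le_abs_self C
  have := EReal.coe_lt_coe_iff.1 hx
  linarith

theorem lt_div_of_lt_div_of_div_lt_div {x y z c K : ℝ} (hy : 0 < y) (hz : 0 < z) (hc : 0 < c)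
    (hK : 0 < K) (hcx : c < x / y) (hx : x / z < c / K) : K < z / y := by
  rw [lt_div_iff₀ hy] at hcx
  rw [div_lt_div_iff₀ hz hK] at hx
  rw [lt_div_iff₀ hy]
  have : c * (K * y) < c * z := by nlinarith
  exact lt_of_mul_lt_mul_left this hc.le

theorem div_lt_of_div_lt_of_div_lt_div {x y z C δ : ℝ} (hy : 0 < y) (hz : 0 < z) (hC : 0 < C)
    (hδ : 0 < δ) (hCx : x / y < C) (hx : C / δ < x / z) : z / y < δ := by
  rw [div_lt_iff₀ hy] at hCx
  rw [div_lt_div_iff₀ hδ hz] at hx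
  rw [div_lt_iff₀ hy]
  have : C * z < C * (δ * y) := by nlinarith
  exact lt_of_mul_lt_mul_left this hC.le

variable {X Y Z : α → ℝ}

theorem liminf_ratio_eq_top (hY : ∀ᶠ x in l, 0 < Y x) (hZ : ∀ᶠ x in l, 0 < Z x)
    (hXY : 0 < liminf (fun x => ((X x / Y x : ℝ) : EReal)) l)
    (hXZ : limsup (fun x => ((X x / Z x : ℝ) : EReal)) l = 0) :
    liminf (fun x => ((Z x / Y x : ℝ) : EReal)) l = ⊤ := by
  obtain ⟨c, hc, hcXY⟩ := exists_pos_eventually_lt_of_pos_liminf hXY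
  refine (EReal.eq_top_iff_forall_lt _).2 fun K => ?_
  have hK : 0 < |K| + 1 := by positivity
  have hεXZ : ∀ᶠ x in l, X x / Z x < c / (|K| + 1) := (eventually_lt_of_limsup_lt
    (hXZ.trans_lt (EReal.coe_pos.2 (by positivity)))).mono fun _ => EReal.coe_lt_coe_iff.1
  refine (EReal.coe_lt_coe_iff.2 (by linarith [le_abs_self K] : K < |K| + 1)).trans_le
    (le_liminf_of_le (by isBoundedDefault) ?_)
  filter_upwards [hY, hZ, hcXY, hεXZ] with x hy hz hcx hεx
  exact EReal.coe_le_coe_iff.2 (lt_div_of_lt_div_of_div_lt_div hy hz hc hK hcx hεx).le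

theorem limsup_ratio_eq_top (hY : ∀ᶠ x in l, 0 < Y x) (hZ : ∀ᶠ x in l, 0 < Z x)
    (hXY : 0 < liminf (fun x => ((X x / Y x : ℝ) : EReal)) l)
    (hXZ : liminf (fun x => ((X x / Z x : ℝ) : EReal)) l = 0) :
    limsup (fun x => ((Z x / Y x : ℝ) : EReal)) l = ⊤ := by
  obtain ⟨c, hc, hcXY⟩ := exists_pos_eventually_lt_of_pos_liminf hXY
  refine (EReal.eq_top_iff_forall_lt _).2 fun K => ?_
  have hK : 0 < |K| + 1 := by positivity
  have hεXZ : ∃ᶠ x in l, X x / Z x < c / (|K| + 1) := (frequently_lt_of_liminf_lt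
    (by isBoundedDefault) (hXZ.trans_lt (EReal.coe_pos.2 (by positivity)))).mono
    fun _ => EReal.coe_lt_coe_iff.1
  refine (EReal.coe_lt_coe_iff.2 (by linarith [le_abs_self K] : K < |K| + 1)).trans_le
    (le_limsup_of_frequently_le ?_ (by isBoundedDefault))
  refine (hεXZ.and_eventually (hY.and (hZ.and hcXY))).mono fun x ⟨hεx, hy, hz, hcx⟩ => ?_
  exact EReal.coe_le_coe_iff.2 (lt_div_of_lt_div_of_div_lt_div hy hz hc hK hcx hεx).le

theorem liminf_ratio_eq_zero (hY : ∀ᶠ x in l, 0 < Y x) (hZ : ∀ᶠ x in l, 0 < Z x)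
    (hXY : limsup (fun x => ((X x / Y x : ℝ) : EReal)) l < ⊤)
    (hXZ : limsup (fun x => ((X x / Z x : ℝ) : EReal)) l = ⊤) :
    liminf (fun x => ((Z x / Y x : ℝ) : EReal)) l = 0 := by
  obtain ⟨C, hC, hCXY⟩ := exists_pos_eventually_lt_of_limsup_lt_top hXY
  refine le_antisymm (EReal.le_of_forall_lt_iff_le.1 fun δ hδ => ?_) ?_
  · have hδ : 0 < δ := by exact_mod_cast hδ
    have hNXZ : ∃ᶠ x in l, C / δ < X x / Z x := (frequently_lt_of_lt_limsup (by isBoundedDefault)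
      (hXZ ▸ EReal.coe_lt_top (C / δ))).mono fun _ => EReal.coe_lt_coe_iff.1
    refine liminf_le_of_frequently_le' ((hNXZ.and_eventually (hY.and (hZ.and hCXY))).mono ?_)
    rintro x ⟨hNx, hy, hz, hCx⟩
    exact EReal.coe_le_coe_iff.2 (div_lt_of_div_lt_of_div_lt_div hy hz hC hδ hCx hNx).le
  · refine le_liminf_of_le (by isBoundedDefault) ?_
    filter_upwards [hY, hZ] with x hy hz
    exact EReal.coe_nonneg.2 (div_pos hz hy).le

theorem limsup_ratio_eq_zero [l.NeBot] (hY : ∀ᶠ x in l, 0 < Y x) (hZ : ∀ᶠ x in l, 0 < Z x)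
    (hXY : limsup (fun x => ((X x / Y x : ℝ) : EReal)) l < ⊤)
    (hXZ : liminf (fun x => ((X x / Z x : ℝ) : EReal)) l = ⊤) :
    limsup (fun x => ((Z x / Y x : ℝ) : EReal)) l = 0 := by
  obtain ⟨C, hC, hCXY⟩ := exists_pos_eventually_lt_of_limsup_lt_top hXY
  refine le_antisymm (EReal.le_of_forall_lt_iff_le.1 fun δ hδ => ?_) ?_
  · have hδ : 0 < δ := by exact_mod_cast hδ
    have hNXZ : ∀ᶠ x in l, C / δ < X x / Z x := (eventually_lt_of_lt_liminf
      (hXZ ▸ EReal.coe_lt_top (C / δ))).mono fun _ => EReal.coe_lt_coe_iff.1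
    refine limsup_le_of_le (by isBoundedDefault) ?_
    filter_upwards [hY, hZ, hCXY, hNXZ] with x hy hz hCx hNx
    exact EReal.coe_le_coe_iff.2 (div_lt_of_div_lt_of_div_lt_div hy hz hC hδ hCx hNx).le
  · refine le_limsup_of_frequently_le (Eventually.frequently ?_) (by isBoundedDefault)
    filter_upwards [hY, hZ] with x hy hz
    exact EReal.coe_nonneg.2 (div_pos hz hy).le

end Ratios

section RelativeOrders

variable (f : VVDS E) (g : VVDS F) (h : VVDS G) (m p : ℕ)

theorem relRittOrder_eq_limsup_comp : relRittOrder m p g h = limsup (fun σ =>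
    ((Real.log^[m] (h.Minv (f.M σ)) / Real.log^[p] (g.Minv (f.M σ)) : ℝ) : EReal)) atTop := by
  conv_lhs => rw [relRittOrder, ← f.map_Minv_comp_M_atTop g, ← limsup_comp]
  simp only [Function.comp_def, g.M_Minv (f.M_pos _)]

theorem relRittLowerOrder_eq_liminf_comp : relRittLowerOrder m p g h = liminf (fun σ =>
    ((Real.log^[m] (h.Minv (f.M σ)) / Real.log^[p] (g.Minv (f.M σ)) : ℝ) : EReal)) atTop := by
  conv_lhs => rw [relRittLowerOrder, ← f.map_Minv_comp_M_atTop g, ← liminf_comp]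
  simp only [Function.comp_def, g.M_Minv (f.M_pos _)]

end RelativeOrders

theorem stmt_7_general (f : VVDS E) (g : VVDS F) (h : VVDS G) (p q m : ℕ)
    (hf1 : (0 : EReal) < relRittLowerOrder m q f h)
    (hf3 : relRittOrder m q f h < ⊤)
    :
    (relRittOrder m p g h = 0 → relRittLowerOrder p q f g = ⊤) ∧ (relRittLowerOrder m p g h = 0 → relRittOrder p q f g = ⊤) ∧ (relRittOrder m p g h = ⊤ → relRittLowerOrder p q f g = 0) ∧ (relRittLowerOrder m p g h = ⊤ → relRittOrder p q f g = 0) := by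
  have hY : ∀ᶠ σ in atTop, 0 < Real.log^[q] σ :=
    (Real.tendsto_log_atTop.iterate q).eventually_gt_atTop 0
  have hZ : ∀ᶠ σ in atTop, 0 < Real.log^[p] (g.Minv (f.M σ)) :=
    ((Real.tendsto_log_atTop.iterate p).comp (f.map_Minv_comp_M_atTop g).le).eventually_gt_atTop 0
  rw [relRittOrder_eq_limsup_comp f g h, relRittLowerOrder_eq_liminf_comp f g h]
  exact ⟨liminf_ratio_eq_top hY hZ hf1, limsup_ratio_eq_top hY hZ hf1,
    liminf_ratio_eq_zero hY hZ hf3, limsup_ratio_eq_zero hY hZ hf3⟩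

theorem stmt_7 (f : VVDS E) (g : VVDS F) (h : VVDS G) (p q m : ℕ)
    (hf1 : (0 : EReal) < relRittLowerOrder m q f h)
    (hf2 : relRittLowerOrder m q f h ≤ relRittOrder m q f h)
    (hf3 : relRittOrder m q f h < ⊤)
    :
    (relRittOrder m p g h = 0 → relRittLowerOrder p q f g = ⊤) ∧ (relRittLowerOrder m p g h = 0 → relRittOrder p q f g = ⊤) ∧ (relRittOrder m p g h = ⊤ → relRittLowerOrder p q f g = 0) ∧ (relRittLowerOrder m p g h = ⊤ → relRittOrder p q f g = 0) :=
  stmt_7_general f g h p q m hf1 hf3
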